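/- Let D be an integral domain with quotient field K, let g ∈ D[x], and let P be a prime ideal of D such that d(g) ⊆ P. Then either all coefficients of g lie in P (i.e., g ∈ P[x]), or the residue ring D/P has at most deg(g) elements. -/

import Mathlib

set_option linter.unusedSectionVars false

open Polynomial

variable (D : Type*) [CommRing D] [IsDomain D]

/-- The fixed divisor `d(g)` of a polynomial `g ∈ D[X]`: the ideal of `D`
generated by the values `g(a)`, `a ∈ D`. -/
def fixDiv (g : Polynomial D) : Ideal D :=
  Ideal.span (Set.range fun a : D => g.eval a)

/-!
If `d(g) ⊆ P`, the reduction `ḡ` of `g` modulo `P` vanishes at every point of the domain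
`D ⧸ P`. A nonzero polynomial over a domain has at most `deg ḡ ≤ deg g` roots, so either
`ḡ = 0`, i.e. all coefficients of `g` lie in `P`, or `D ⧸ P` has at most `deg g` elements.
-/

variable {D}

theorem fixDiv_le_iff {g : D[X]} {I : Ideal D} : fixDiv D g ≤ I ↔ ∀ a, g.eval a ∈ I := by
  rw [fixDiv, Ideal.span_le, Set.range_subset_iff]
  rfl

theorem eval_map_mk_eq_zero_of_fixDiv_le {g : D[X]} {I : Ideal D} (h : fixDiv D g ≤ I)
    (x : D ⧸ I) : (g.map (Ideal.Quotient.mk I)).eval x = 0 := by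
  obtain ⟨a, rfl⟩ := Ideal.Quotient.mk_surjective x
  rw [eval_map_apply, Ideal.Quotient.eq_zero_iff_mem]
  exact fixDiv_le_iff.1 h a

theorem Polynomial.map_quotient_mk_eq_zero_iff {R : Type*} [CommRing R] {g : R[X]}
    {I : Ideal R} : g.map (Ideal.Quotient.mk I) = 0 ↔ ∀ n, g.coeff n ∈ I := by
  simp only [Polynomial.ext_iff, coeff_map, coeff_zero, Ideal.Quotient.eq_zero_iff_mem]

theorem coeffs_mem_or_index_le_of_fixDiv_le_prime_general
    (g : Polynomial D) (P : Ideal D) (hP : P.IsPrime)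
    (h : fixDiv D g ≤ P) :
    (∀ n : ℕ, g.coeff n ∈ P) ∨ Cardinal.mk (D ⧸ P) ≤ (g.natDegree : Cardinal) := by
  rw [or_iff_not_imp_right, not_le, ← map_quotient_mk_eq_zero_iff]
  intro hcard
  exact eq_zero_of_forall_eval_zero_of_natDegree_lt_card _
    (eval_map_mk_eq_zero_of_fixDiv_le h)
    ((Nat.cast_le.2 natDegree_map_le).trans_lt hcard)

/-- **Remark.** Let `D` be an integral domain with quotient field `K`, `g ∈ D[X]` and
`P` a prime ideal of `D` with `d(g) ⊆ P`. Then either all coefficients of `g` lie in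
`P`, or the residue ring `D ⧸ P` has at most `deg g` elements. -/
theorem coeffs_mem_or_index_le_of_fixDiv_le_prime
    (K : Type*) [Field K] [Algebra D K] [IsFractionRing D K]
    (g : Polynomial D) (P : Ideal D) (hP : P.IsPrime)
    (h : fixDiv D g ≤ P) :
    (∀ n : ℕ, g.coeff n ∈ P) ∨ Cardinal.mk (D ⧸ P) ≤ (g.natDegree : Cardinal) :=
  coeffs_mem_or_index_le_of_fixDiv_le_prime_general g P hP h
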